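/- Let f(x)=e^x/(1+e^x) and c_k < c_{k+1}. For all v > c_k - ln(1 - e^{-(c_{k+1}-c_k)}), we have (1 - f(c_k - v))·f(c_{k+1} - v) > f(c_k - v). -/

import Mathlib

noncomputable def sigmoid (x : ℝ) : ℝ := Real.exp x / (1 + Real.exp x)

lemma one_sub_sigmoid (x : ℝ) : 1 - sigmoid x = (1 + Real.exp x)⁻¹ := by
  have : 1 + Real.exp x ≠ 0 := by positivity
  rw [sigmoid]
  field_simp
  ring

lemma one_sub_sigmoid_pos (x : ℝ) : 0 < 1 - sigmoid x := by
  rw [one_sub_sigmoid]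
  positivity

lemma sigmoid_eq_exp_mul_one_sub_sigmoid (x : ℝ) :
    sigmoid x = Real.exp x * (1 - sigmoid x) := by
  rw [one_sub_sigmoid, sigmoid, div_eq_mul_inv]

lemma sigmoid_lt_one_sub_sigmoid_mul_iff (x y : ℝ) :
    sigmoid x < (1 - sigmoid x) * sigmoid y ↔ Real.exp x < sigmoid y := by
  nth_rw 1 [sigmoid_eq_exp_mul_one_sub_sigmoid x]
  rw [mul_comm (1 - sigmoid x)]
  exact mul_lt_mul_iff_of_pos_right (one_sub_sigmoid_pos x)

/-- With `a = exp x` and `b = exp y`, both sides say `a + a * b < b`. -/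
lemma exp_lt_sigmoid_iff (x y : ℝ) :
    Real.exp x < sigmoid y ↔ Real.exp x < 1 - Real.exp (x - y) := by
  have hb : 0 < Real.exp y := Real.exp_pos y
  rw [sigmoid, Real.exp_sub, lt_div_iff₀ (by positivity), lt_sub_comm,
    div_lt_iff₀ hb]
  constructor <;> intro h <;> nlinarith

theorem stmt_16 (ck ckk : ℝ) (hc : ck < ckk) :
    ∀ v : ℝ, v > ck - Real.log (1 - Real.exp (-(ckk - ck))) →
      (1 - sigmoid (ck - v)) * sigmoid (ckk - v) > sigmoid (ck - v) := by
  intro v hv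
  rw [show -(ckk - ck) = (ck - v) - (ckk - v) by ring] at hv
  have hpos : 0 < 1 - Real.exp ((ck - v) - (ckk - v)) := by
    rw [sub_pos, Real.exp_lt_one_iff]
    linarith
  have hlog : ck - v < Real.log (1 - Real.exp ((ck - v) - (ckk - v))) := by linarith
  rw [gt_iff_lt, sigmoid_lt_one_sub_sigmoid_mul_iff, exp_lt_sigmoid_iff]
  exact (Real.lt_log_iff_exp_lt hpos).mp hlog
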